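/- arXiv:1607.05596 — 5 statements merged into one kernel-verified Lean document; each statement's English description precedes it below -/
import Mathlib

section
/- Let α be a type of operations, rd : α → ℕ a round assignment, and P : α → α → Prop a relation (the process order) such that (i) every a : α has only finitely many P-predecessors (the set {b | P b a} is finite) and (ii) P a b implies rd a ≤ rd b. Suppose that for every r : ℕ there is a linear order ≤_r on the fiber {a // rd a = r} such that every element of the fiber has only finitely many strict ≤_r-predecessors in the fiber, and such that whenever P a b with rd a = rd b = r, one has a ≤_r b. Then there exists a linear order ≤ on α such that: P a b implies a ≤ b; for a, b in the same fiber r, a ≤_r b implies a ≤ b; and every element of α has only finitely many strict ≤-predecessors. (This is the order-theoretic content of the paper's Proposition 2: round-based sequentially consistent objects compose, because the per-round linear extensions and the process order admit a common linear extension in which every operation has a finite past.) -/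
/-!
The process order and the per-round orders generate a preorder on operations. Every generating
step weakly increases the injective key `(round, position within the round)` in `ℕ ×ₗ ℕ`, so this
preorder is a partial order, and since the key is well-founded while every operation has only
finitely many immediate predecessors, every operation has a finite lower set.

A countable partial order with finite lower sets has a linear extension with finite pasts:
enumerate it by `e : α → ℕ` and sort lexicographically by `(max e on Iic a, #Iic a, e a)`.
The first coordinate is monotone and dominates `e`, so only finitely many elements precede `a`.
-/

open Set Function Relation

theorem strictMono_ncard_Iio {β : Type*} [Preorder β] (h : ∀ x : β, (Iio x).Finite) :
    StrictMono fun x : β => (Iio x).ncard :=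
  fun _ y hxy => ncard_lt_ncard (Iio_ssubset_Iio hxy) (h y)

theorem Relation.finite_setOf_reflTransGen {α β : Type*} [PartialOrder β] [WellFoundedLT β]
    {R : α → α → Prop} {f : α → β} (hf : Injective f) (hR : ∀ a b, R a b → f a ≤ f b)
    (hfin : ∀ a, {b | R b a}.Finite) (a : α) : {b | ReflTransGen R b a}.Finite := by
  induction a using (InvImage.wf f wellFounded_lt).induction with
  | _ a ih =>
  have hsub : {b | ReflTransGen R b a} ⊆
      insert a (⋃ c ∈ {c | R c a ∧ c ≠ a}, {b | ReflTransGen R b c}) := by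
    intro b hb
    induction hb using ReflTransGen.head_induction_on with
    | refl => exact mem_insert a _
    | @head b c hbc _ ih =>
      rcases ih with rfl | hc
      · by_cases hba : b = c
        · exact hba ▸ mem_insert b _
        · exact mem_insert_of_mem _ (mem_biUnion ⟨hbc, hba⟩ ReflTransGen.refl)
      · obtain ⟨d, hd, hcd⟩ := mem_iUnion₂.1 hc
        exact mem_insert_of_mem _ (mem_biUnion hd (hcd.head hbc))
  refine (Finite.insert a (Finite.biUnion ((hfin a).subset fun c hc => hc.1) ?_)).subset hsub
  exact fun c hc => ih c ((hR c a hc.1).lt_of_ne (hf.ne hc.2))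

theorem exists_linearExtension_finite_Iio_of_finite_Iic {α : Type*} [PartialOrder α]
    [Countable α] (hfin : ∀ a : α, (Iic a).Finite) :
    ∃ L : LinearOrder α, (∀ a b : α, a ≤ b → L.le a b) ∧ ∀ a : α, {b | L.lt b a}.Finite := by
  obtain ⟨e, he⟩ := Countable.exists_injective_nat α
  let h a := (hfin a).toFinset.sup e
  -- `h` is monotone and bounds `e`, which makes pasts finite; `#Iic` makes `key` strictly
  -- monotone, and `e` makes it injective.
  let key a : ℕ ×ₗ ℕ ×ₗ ℕ := toLex (h a, toLex ((Iic a).ncard, e a))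
  have key_injective : Injective key := fun a b hab =>
    he (congrArg (fun k => (ofLex (ofLex k).2).2) hab)
  have key_strictMono : StrictMono key := by
    intro a b hab
    refine Prod.Lex.toLex_strictMono (Prod.mk_lt_mk_of_le_of_lt ?_ ?_)
    · exact Finset.sup_mono (by simpa using Iic_subset_Iic.2 hab.le)
    · exact Prod.Lex.toLex_lt_toLex.2 (Or.inl (ncard_lt_ncard (Iic_ssubset_Iic.2 hab) (hfin b)))
  refine ⟨LinearOrder.lift' key key_injective, fun a b hab => key_strictMono.monotone hab, ?_⟩
  intro a
  refine ((finite_Iic (h a)).preimage he.injOn).subset fun b hb => ?_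
  have hh : h b ≤ h a := by
    rcases Prod.Lex.toLex_lt_toLex.1 hb with hlt | ⟨heq, -⟩
    exacts [hlt.le, heq.le]
  exact le_trans (Finset.le_sup (by simp)) hh

namespace RoundBased

variable {α : Type*} (rd : α → ℕ) (L : ∀ r : ℕ, LinearOrder {a : α // rd a = r})

noncomputable def pos (r : ℕ) (x : {a : α // rd a = r}) : ℕ :=
  {y | (L r).lt y x}.ncard

noncomputable def key (a : α) : ℕ ×ₗ ℕ :=
  toLex (rd a, pos rd L (rd a) ⟨a, rfl⟩)

variable (P : α → α → Prop)

def Step (a b : α) : Prop :=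
  P a b ∨ ∃ (r : ℕ) (ha : rd a = r) (hb : rd b = r), (L r).le ⟨a, ha⟩ ⟨b, hb⟩

variable {rd L P}

theorem key_eq {a : α} {r : ℕ} (ha : rd a = r) :
    key rd L a = toLex (r, pos rd L r ⟨a, ha⟩) := by
  subst ha; rfl

theorem pos_strictMono
    (hLfin : ∀ (r : ℕ) (x : {a : α // rd a = r}), {y | (L r).lt y x}.Finite) (r : ℕ) :
    @StrictMono _ _ (L r).toPreorder _ (pos rd L r) :=
  letI := L r; strictMono_ncard_Iio (hLfin r)

theorem key_injective
    (hLfin : ∀ (r : ℕ) (x : {a : α // rd a = r}), {y | (L r).lt y x}.Finite) :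
    Injective (key rd L) := by
  intro a b hab
  have hr : rd a = rd b := congrArg (fun k => (ofLex k).1) hab
  rw [key_eq hr, key_eq rfl] at hab
  exact congrArg Subtype.val
    ((pos_strictMono hLfin (rd b)).injective (congrArg (fun k => (ofLex k).2) hab))

theorem key_le_of_step
    (hLfin : ∀ (r : ℕ) (x : {a : α // rd a = r}), {y | (L r).lt y x}.Finite)
    (hPrd : ∀ a b : α, P a b → rd a ≤ rd b)
    (hLP : ∀ (r : ℕ) (a b : α) (ha : rd a = r) (hb : rd b = r),
      P a b → (L r).le ⟨a, ha⟩ ⟨b, hb⟩)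
    {a b : α} (hab : Step rd L P a b) : key rd L a ≤ key rd L b := by
  have key_le_of_le {r : ℕ} (ha : rd a = r) (hb : rd b = r)
      (hab : (L r).le ⟨a, ha⟩ ⟨b, hb⟩) : key rd L a ≤ key rd L b := by
    rw [key_eq ha, key_eq hb]
    exact Prod.Lex.toLex_le_toLex.2 (Or.inr ⟨rfl, (pos_strictMono hLfin r).monotone hab⟩)
  rcases hab with hP | ⟨r, ha, hb, hle⟩
  · rcases (hPrd a b hP).lt_or_eq with hlt | heq
    · exact Prod.Lex.toLex_le_toLex.2 (Or.inl hlt)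
    · exact key_le_of_le heq rfl (hLP _ a b heq rfl hP)
  · exact key_le_of_le ha hb hle

theorem key_le_of_reflTransGen
    (hLfin : ∀ (r : ℕ) (x : {a : α // rd a = r}), {y | (L r).lt y x}.Finite)
    (hPrd : ∀ a b : α, P a b → rd a ≤ rd b)
    (hLP : ∀ (r : ℕ) (a b : α) (ha : rd a = r) (hb : rd b = r),
      P a b → (L r).le ⟨a, ha⟩ ⟨b, hb⟩)
    {a b : α} (hab : ReflTransGen (Step rd L P) a b) : key rd L a ≤ key rd L b := by
  simpa only [reflTransGen_eq_self] using
    hab.lift (key rd L) fun _ _ => key_le_of_step hLfin hPrd hLP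

theorem finite_setOf_step
    (hPfin : ∀ a : α, {b : α | P b a}.Finite)
    (hLfin : ∀ (r : ℕ) (x : {a : α // rd a = r}), {y | (L r).lt y x}.Finite) (a : α) :
    {b | Step rd L P b a}.Finite := by
  let _ := L (rd a)
  have hsub : {b | Step rd L P b a} ⊆
      {b | P b a} ∪ Subtype.val '' Iic (α := {x // rd x = rd a}) ⟨a, rfl⟩ := by
    rintro b (hP | ⟨r, hb, ha, hle⟩)
    · exact Or.inl hP
    · subst ha
      exact Or.inr ⟨⟨b, hb⟩, hle, rfl⟩
  refine ((hPfin a).union (Finite.image _ ?_)).subset hsub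
  rw [← Iio_insert]
  exact (hLfin (rd a) ⟨a, rfl⟩).insert _

end RoundBased

/-- **Round-based composition of sequential consistency (order-theoretic form).**
Given a round assignment `rd`, a process order `P` with finite sets of predecessors that
never goes from a later round to an earlier one, and per-round linear orders with finite
pasts containing the process order restricted to the round, there is a global linear order
with finite pasts containing the process order and all the per-round orders. -/
theorem round_based_composition_order
    {α : Type*} (rd : α → ℕ) (P : α → α → Prop)
    (hPfin : ∀ a : α, {b : α | P b a}.Finite)
    (hPrd : ∀ a b : α, P a b → rd a ≤ rd b)
    (L : ∀ r : ℕ, LinearOrder {a : α // rd a = r})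
    (hLfin : ∀ (r : ℕ) (x : {a : α // rd a = r}), {y : {a : α // rd a = r} | (L r).lt y x}.Finite)
    (hLP : ∀ (r : ℕ) (a b : α) (ha : rd a = r) (hb : rd b = r),
      P a b → (L r).le ⟨a, ha⟩ ⟨b, hb⟩) :
    ∃ L' : LinearOrder α,
      (∀ a b : α, P a b → L'.le a b) ∧
      (∀ (r : ℕ) (a b : α) (ha : rd a = r) (hb : rd b = r),
        (L r).le ⟨a, ha⟩ ⟨b, hb⟩ → L'.le a b) ∧
      (∀ a : α, {b : α | L'.lt b a}.Finite) := by
  let _ : PartialOrder α :=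
    { le := ReflTransGen (RoundBased.Step rd L P)
      le_refl := fun _ => .refl
      le_trans := fun _ _ _ => .trans
      le_antisymm := fun _ _ hab hba =>
        RoundBased.key_injective hLfin
          ((RoundBased.key_le_of_reflTransGen hLfin hPrd hLP hab).antisymm
            (RoundBased.key_le_of_reflTransGen hLfin hPrd hLP hba)) }
  have : Countable α := (ofLex.injective.comp (RoundBased.key_injective hLfin)).countable
  obtain ⟨L', hle, hfin⟩ := exists_linearExtension_finite_Iio_of_finite_Iic
    (Relation.finite_setOf_reflTransGen (RoundBased.key_injective hLfin)
      (fun _ _ => RoundBased.key_le_of_step hLfin hPrd hLP)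
      (RoundBased.finite_setOf_step hPfin hLfin))
  exact ⟨L', fun a b h => hle a b (.single (Or.inl h)),
    fun r a b ha hb h => hle a b (.single (Or.inr ⟨r, ha, hb, h⟩)), hfin⟩
end

section
/- Let α be a type, n : ℕ, and rd : α → ℕ a round assignment. For each i < n let lᵢ be a finite list over α such that the values rd x for x along lᵢ are nondecreasing. For each r : ℕ let T_r be a set of finite lists over α (a sequential specification), and suppose that for each round r occurring in some lᵢ there exists a word w_r ∈ T_r that is a shuffle of the n lists lᵢ.filter (fun x => rd x = r). Then there exists a word w that is a shuffle of l₀, …, l_{n−1} such that for every such round r, w.filter (fun x => rd x = r) ∈ T_r. (Finite-history form of the paper's Proposition 2: if each round's sub-history is sequentially consistent with respect to its own specification and rounds are nondecreasing along each process, the whole history is sequentially consistent with respect to the composition of the specifications.) -/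
/-! Concatenate the round witnesses in increasing round order. Because rounds are nondecreasing
along each process, every process list is the concatenation of its round-`r` sublists for
`r = 0, 1, …`, so this concatenation interleaves the processes; because the round-`r` witness
consists of round-`r` operations only, filtering the concatenation by round `r` gives back
that witness. -/

/-- `w` is a shuffle (interleaving) of the family of lists `l i`, `i : Fin n`:
there is a tagged list whose projection is `w` and whose `i`-tagged sublist is `l i`. -/
def IsInterleaving {α : Type*} {n : ℕ} (l : Fin n → List α) (w : List α) : Prop :=
  ∃ tl : List (Fin n × α), w = tl.map Prod.snd ∧
    ∀ i : Fin n, (tl.filter (fun p => p.1 = i)).map Prod.snd = l i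

namespace IsInterleaving

variable {α : Type*} {n : ℕ}

theorem nil : IsInterleaving (fun _ : Fin n => ([] : List α)) [] :=
  ⟨[], rfl, fun _ => rfl⟩

theorem append {l l' : Fin n → List α} {w w' : List α}
    (h : IsInterleaving l w) (h' : IsInterleaving l' w') :
    IsInterleaving (fun i => l i ++ l' i) (w ++ w') := by
  obtain ⟨tl, rfl, htl⟩ := h
  obtain ⟨tl', rfl, htl'⟩ := h'
  exact ⟨tl ++ tl', (List.map_append ..).symm, fun i => by
    rw [List.filter_append, List.map_append, htl, htl']⟩

theorem flatMap {β : Type*} {l : β → Fin n → List α} {W : β → List α} (S : List β)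
    (h : ∀ s ∈ S, IsInterleaving (l s) (W s)) :
    IsInterleaving (fun i => S.flatMap (fun s => l s i)) (S.flatMap W) := by
  induction S with
  | nil => exact nil
  | cons s S ih =>
    simp only [List.flatMap_cons]
    exact (h s List.mem_cons_self).append (ih fun t ht => h t (List.mem_cons_of_mem s ht))

theorem exists_mem_of_mem {l : Fin n → List α} {w : List α} (h : IsInterleaving l w)
    {x : α} (hx : x ∈ w) : ∃ i, x ∈ l i := by
  obtain ⟨tl, rfl, htl⟩ := h
  obtain ⟨p, hp, rfl⟩ := List.mem_map.mp hx
  refine ⟨p.1, htl p.1 ▸ List.mem_map_of_mem ?_⟩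
  simpa using hp

end IsInterleaving

namespace List

variable {α : Type*} (f : α → ℕ)

theorem filter_lt_add_one_of_pairwise {L : List α} (hL : L.Pairwise (fun a b => f a ≤ f b))
    (N : ℕ) : L.filter (f · < N + 1) = L.filter (f · < N) ++ L.filter (f · = N) := by
  induction L with
  | nil => rfl
  | cons a L ih =>
    obtain ⟨ha, hL⟩ := pairwise_cons.mp hL
    rw [filter_cons, filter_cons, filter_cons, ih hL]
    by_cases h : f a = N
    · subst h
      have : L.filter (f · < f a) = [] := filter_eq_nil_iff.mpr fun x hx => by simpa using ha x hx
      simp [this]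
    · have : f a < N + 1 ↔ f a < N := by omega
      simp only [decide_eq_true_eq, this, h, if_false]
      split_ifs <;> rfl

theorem flatMap_range_filter_eq_of_pairwise {L : List α}
    (hL : L.Pairwise (fun a b => f a ≤ f b)) (N : ℕ) :
    (range N).flatMap (fun r => L.filter (f · = r)) = L.filter (f · < N) := by
  induction N with
  | zero => simp
  | succ N ih => rw [range_succ, flatMap_append, ih, filter_lt_add_one_of_pairwise f hL,
      flatMap_singleton]

theorem filter_flatMap_range_of_forall_mem {W : ℕ → List α} (hW : ∀ s, ∀ x ∈ W s, f x = s)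
    (N r : ℕ) : ((range N).flatMap W).filter (f · = r) = if r < N then W r else [] := by
  induction N with
  | zero => simp
  | succ N ih =>
    have hN : (W N).filter (f · = r) = if N = r then W N else [] := by
      split_ifs with h
      · exact filter_eq_self.mpr fun x hx => by simp [hW N x hx, h]
      · exact filter_eq_nil_iff.mpr fun x hx => by simp [hW N x hx, h]
    rw [range_succ, flatMap_append, flatMap_singleton, filter_append, ih, hN]
    rcases lt_trichotomy r N with h | rfl | h
    · simp [h, h.ne', Nat.lt_succ_of_lt h]
    · simp
    · simp [h.ne, Nat.not_lt.mpr h.le, Nat.not_le.mpr h]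

end List

/-- **Round-based composition of sequential consistency (finite-history form).**
If rounds are nondecreasing along each process list and, for every round `r` occurring in
the history, some word of `T r` interleaves the round-`r` sublists of the processes, then
some interleaving of the whole process lists has all its round-`r` sublists in `T r`. -/
theorem round_based_composition_lists
    {α : Type*} {n : ℕ} (rd : α → ℕ) (l : Fin n → List α)
    (hmono : ∀ i : Fin n, (l i).Pairwise (fun a b => rd a ≤ rd b))
    (T : ℕ → Set (List α))
    (hround : ∀ r : ℕ, (∃ i : Fin n, ∃ x ∈ l i, rd x = r) →
      ∃ w : List α,
        IsInterleaving (fun i => (l i).filter (fun x => rd x = r)) w ∧ w ∈ T r) :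
    ∃ w : List α, IsInterleaving l w ∧
      ∀ r : ℕ, (∃ i : Fin n, ∃ x ∈ l i, rd x = r) →
        w.filter (fun x => rd x = r) ∈ T r := by
  have hwit : ∀ r, ∃ w, IsInterleaving (fun i => (l i).filter (fun x => rd x = r)) w ∧
      ((∃ i : Fin n, ∃ x ∈ l i, rd x = r) → w ∈ T r) := by
    intro r
    by_cases hr : ∃ i : Fin n, ∃ x ∈ l i, rd x = r
    · obtain ⟨w, hw, hwT⟩ := hround r hr
      exact ⟨w, hw, fun _ => hwT⟩
    · refine ⟨[], ?_, fun h => absurd h hr⟩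
      convert IsInterleaving.nil with i
      exact List.filter_eq_nil_iff.mpr fun x hx hxr => hr ⟨i, x, hx, by simpa using hxr⟩
  choose W hW hWT using hwit
  have hW_rd : ∀ r, ∀ x ∈ W r, rd x = r := fun r x hx => by
    obtain ⟨i, hi⟩ := (hW r).exists_mem_of_mem hx
    simpa using (List.mem_filter.mp hi).2
  obtain ⟨N, hN⟩ : ∃ N, ∀ i, ∀ x ∈ l i, rd x < N :=
    ⟨∑ i, ((l i).map rd).sum + 1, fun i x hx => Nat.lt_succ_of_le <|
      (List.le_sum_of_mem (List.mem_map_of_mem hx)).trans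
        (Finset.single_le_sum (f := fun i => ((l i).map rd).sum) (fun _ _ => Nat.zero_le _)
          (Finset.mem_univ i))⟩
  refine ⟨(List.range N).flatMap W, ?_, fun r ⟨i, x, hx, hxr⟩ => ?_⟩
  · convert IsInterleaving.flatMap (List.range N) fun r _ => hW r with i
    rw [List.flatMap_range_filter_eq_of_pairwise rd (hmono i),
      List.filter_eq_self.mpr fun x hx => by simpa using hN i x hx]
  · rw [List.filter_flatMap_range_of_forall_mem rd hW_rd, if_pos (hxr ▸ hN i x hx)]
    exact hWT r ⟨i, x, hx, hxr⟩
end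

section
/- Let α be a type, n : ℕ, l₀, …, l_{n−1} finite lists over α, and rd : α → ℕ such that rd is nondecreasing along each lᵢ. Let r₁ < r₂ < … < r_m be an increasing enumeration of a finite set of naturals containing every value of rd occurring in some lᵢ, and for each j ≤ m let w_{r_j} be a shuffle of the n lists lᵢ.filter (fun x => rd x = r_j). Then the concatenation w_{r₁} ++ w_{r₂} ++ … ++ w_{r_m} is a shuffle of l₀, …, l_{n−1}. -/
/-! Since each `l i` is sorted by round, it is the concatenation, in increasing round order, of
its round-`r` sublists for `r ∈ rs`. Interleavings are compatible with concatenation, so the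
per-round interleavings `w r` concatenate to an interleaving of these concatenations. -/

namespace List

variable {α β : Type*}

theorem filter_append_filter_not_of_pairwise {p : α → Bool} :
    ∀ {L : List α}, L.Pairwise (fun a b => p b → p a) →
      L.filter p ++ L.filter (fun a => !p a) = L
  | [], _ => rfl
  | a :: L, hL => by
    obtain ⟨ha, hL⟩ := pairwise_cons.1 hL
    by_cases hpa : p a
    · simp [hpa, filter_append_filter_not_of_pairwise hL]
    · have hnot : ∀ b ∈ L, p b = false := fun b hb => by
        simpa using mt (ha b hb) hpa
      have hnil : L.filter p = [] := filter_eq_nil_iff.2 fun b hb => by simp [hnot b hb]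
      have hall : L.filter (fun a => !p a) = L := filter_eq_self.2 fun b hb => by simp [hnot b hb]
      simp [hpa, hnil, hall]

theorem flatten_map_filter_eq_self_of_pairwise [Preorder β] [DecidableEq β] (rd : α → β) :
    ∀ {rs : List β}, rs.Pairwise (· < ·) → ∀ {L : List α},
      L.Pairwise (fun a b => rd a ≤ rd b) → (∀ x ∈ L, rd x ∈ rs) →
        (rs.map fun r => L.filter (fun x => rd x = r)).flatten = L
  | [], _, L, _, hcover => by
    simpa using (eq_nil_iff_forall_not_mem.2 fun x hx => by simpa using hcover x hx).symm
  | r :: rs, hrs, L, hL, hcover => by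
    obtain ⟨hr, hrs⟩ := pairwise_cons.1 hrs
    set L' := L.filter (fun x => !decide (rd x = r))
    have hcover' : ∀ x ∈ L', rd x ∈ rs := fun x hx => by
      obtain ⟨hxL, hxr⟩ := mem_filter.1 hx
      exact (mem_cons.1 (hcover x hxL)).resolve_left (by simpa using hxr)
    have hfibre : ∀ r' ∈ rs,
        L.filter (fun x => rd x = r') = L'.filter (fun x => rd x = r') := fun r' hr' => by
      rw [filter_filter]
      refine filter_congr fun x _ => ?_
      by_cases hx : rd x = r' <;> simp [hx, (hr r' hr').ne']
    -- the fibre of the least key `r` comes first in `L`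
    have hfirst : L.Pairwise (fun a b => decide (rd b = r) → decide (rd a = r)) :=
      hL.imp_of_mem fun {a b} ha _ hab hb => by
        by_contra hne
        have hra := hr _ ((mem_cons.1 (hcover a ha)).resolve_left (by simpa using hne))
        exact (hra.trans_le (hab.trans (le_of_eq (of_decide_eq_true hb)))).false
    calc (map (fun r => L.filter (fun x => rd x = r)) (r :: rs)).flatten
        = L.filter (fun x => rd x = r) ++
            (rs.map fun r' => L'.filter (fun x => rd x = r')).flatten := by
          simp [map_congr_left hfibre]
      _ = L.filter (fun x => rd x = r) ++ L' := by
          rw [flatten_map_filter_eq_self_of_pairwise rd hrs (hL.filter _) hcover']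
      _ = L := filter_append_filter_not_of_pairwise hfirst

end List

namespace IsInterleaving

variable {α : Type*} {n : ℕ}

theorem flatten_map {ι : Type*} (l : Fin n → ι → List α) (w : ι → List α) :
    ∀ {rs : List ι}, (∀ r ∈ rs, IsInterleaving (fun i => l i r) (w r)) →
      IsInterleaving (fun i => (rs.map (l i)).flatten) (rs.map w).flatten
  | [], _ => nil
  | r :: rs, h => by
    simpa using (h r List.mem_cons_self).append
      (flatten_map l w fun r' hr' => h r' (List.mem_cons_of_mem _ hr'))

end IsInterleaving

/-- **Concatenating per-round interleavings.**
If `rd` is nondecreasing along each list `l i`, `rs` is a strictly increasing enumeration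
of a finite set of naturals containing every round occurring in the history, and for each
`r ∈ rs` the word `w r` interleaves the round-`r` sublists of the processes, then the
concatenation of the `w r` in the order of `rs` interleaves `l 0, …, l (n-1)`. -/
theorem concat_of_round_interleavings
    {α : Type*} {n : ℕ} (rd : α → ℕ) (l : Fin n → List α)
    (hmono : ∀ i : Fin n, (l i).Pairwise (fun a b => rd a ≤ rd b))
    (rs : List ℕ) (hrs : rs.Pairwise (· < ·))
    (hcover : ∀ (i : Fin n), ∀ x ∈ l i, rd x ∈ rs)
    (w : ℕ → List α)
    (hw : ∀ r ∈ rs, IsInterleaving (fun i => (l i).filter (fun x => rd x = r)) (w r)) :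
    IsInterleaving l (rs.map w).flatten := by
  have hrounds : (fun i => (rs.map fun r => (l i).filter (fun x => rd x = r)).flatten) = l :=
    funext fun i => List.flatten_map_filter_eq_self_of_pairwise rd hrs (hmono i) (hcover i)
  simpa only [hrounds] using
    IsInterleaving.flatten_map (fun i r => (l i).filter (fun x => rd x = r)) w hw
end

section
/- Let α be a type, β a linear order whose strict order is well-founded (for instance ℕ ×ₗ ℕ with the lexicographic order), f : α → β an injective map, and R : α → α → Prop a relation such that R a b implies f a ≤ f b, and such that for every b the set {a | R a b} of direct R-predecessors of b is finite. Then for every b the set {a | Relation.ReflTransGen R a b} is finite, i.e., every element has a finite past under the reflexive-transitive closure of R. -/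
/-- **Finite pasts under the reflexive-transitive closure.**
If `R` is monotone with respect to an injective map `f` into a linear order whose strict
order is well-founded, and every element has finitely many direct `R`-predecessors, then
every element has finitely many predecessors under the reflexive-transitive closure. -/
theorem reflTransGen_finite_past
    {α β : Type*} [LinearOrder β] [WellFoundedLT β]
    (f : α → β) (hf : Function.Injective f)
    (R : α → α → Prop) (hR : ∀ a b : α, R a b → f a ≤ f b)
    (hfin : ∀ b : α, {a : α | R a b}.Finite) :
    ∀ b : α, {a : α | Relation.ReflTransGen R a b}.Finite := by
  have hwf : WellFounded (fun a b : α => f a < f b) := InvImage.wf f wellFounded_lt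
  intro b
  induction b using hwf.induction with
  | _ b ih =>
    have key : {c : α | Relation.ReflTransGen R c b} ⊆
        {b} ∪ ⋃ a ∈ {a : α | R a b ∧ a ≠ b}, {c : α | Relation.ReflTransGen R c a} := by
      intro c hc
      simp only [Set.mem_setOf_eq] at hc
      induction hc using Relation.ReflTransGen.head_induction_on with
      | refl => exact Or.inl rfl
      | @head c' d hcd hdb ihd =>
        rcases ihd with hd | hd
        · simp only [Set.mem_singleton_iff] at hd
          by_cases hcb : c' = b
          · exact Or.inl hcb
          · exact Or.inr (Set.mem_biUnion ⟨hd ▸ hcd, hcb⟩ Relation.ReflTransGen.refl)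
        · simp only [Set.mem_iUnion, Set.mem_setOf_eq] at hd
          obtain ⟨a, ⟨haR, hab⟩, hda⟩ := hd
          exact Or.inr (Set.mem_biUnion ⟨haR, hab⟩ (Relation.ReflTransGen.head hcd hda))
    refine Set.Finite.subset ?_ key
    refine (Set.finite_singleton b).union (Set.Finite.biUnion ?_ ?_)
    · exact (hfin b).subset (fun a ha => ha.1)
    · rintro a ⟨haR, hab⟩
      exact ih a (lt_of_le_of_ne (hR a b haR) (fun h => hab (hf h)))
end

section
/- Let α be a countable type equipped with a partial order ≤ such that for every a : α the set {b | b < a} of strict predecessors is finite. Then there exists a linear order ≤' on α extending ≤ (that is, a ≤ b implies a ≤' b) such that for every a : α the set {b | b <' a} of strict ≤'-predecessors is finite. -/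
/-!
Enumerate `α` injectively by `e : α → ℕ` and rank each element by the largest index in its
(finite) down-set. The rank is monotone and only finitely many elements have rank at most `n`,
since their indices are all at most `n`. Ordering lexicographically by rank first, and then by
an arbitrary linear extension of `≤`, gives a linear extension in which everything below `a`
has rank at most that of `a`, so `a` has a finite past.
-/

section LexByRank

variable {α β : Type*} [PartialOrder α] [LinearOrder β]

noncomputable abbrev linearOrderLexByRank (r : α → β) : LinearOrder α :=
  LinearOrder.lift' (fun a => toLex (r a, toLinearExtension a))
    fun _ _ h => congrArg (fun p => (ofLex p).2) h

theorem linearOrderLexByRank_le_of_le {r : α → β} (hr : Monotone r) {a b : α} (hab : a ≤ b) :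
    (linearOrderLexByRank r).le a b :=
  Prod.Lex.toLex_mono (hr.prodMk toLinearExtension.monotone hab)

theorem le_of_linearOrderLexByRank_lt (r : α → β) {a b : α}
    (hab : (linearOrderLexByRank r).lt a b) : r a ≤ r b :=
  Prod.Lex.monotone_fst (toLex (r a, toLinearExtension a)) (toLex (r b, toLinearExtension b))
    (le_of_lt hab)

theorem exists_linearExtension_finite_past_of_rank {r : α → β} (hr : Monotone r)
    (hfin : ∀ n, (r ⁻¹' Set.Iic n).Finite) :
    ∃ L : LinearOrder α,
      (∀ a b : α, a ≤ b → L.le a b) ∧ (∀ a : α, {b : α | L.lt b a}.Finite) :=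
  ⟨linearOrderLexByRank r, fun _ _ => linearOrderLexByRank_le_of_le hr,
    fun a => (hfin (r a)).subset fun _ hb => le_of_linearOrderLexByRank_lt r hb⟩

end LexByRank

section PastRank

variable {α : Type*} [PartialOrder α] (e : α → ℕ) (hIic : ∀ a : α, (Set.Iic a).Finite)

noncomputable def pastRank (a : α) : ℕ :=
  (hIic a).toFinset.sup e

theorem le_pastRank (a : α) : e a ≤ pastRank e hIic a :=
  Finset.le_sup ((hIic a).mem_toFinset.2 le_rfl)

theorem monotone_pastRank : Monotone (pastRank e hIic) := fun _ _ hab =>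
  Finset.sup_mono (Set.Finite.toFinset_subset_toFinset.2 (Set.Iic_subset_Iic.2 hab))

theorem finite_pastRank_preimage_Iic (he : Function.Injective e) (n : ℕ) :
    (pastRank e hIic ⁻¹' Set.Iic n).Finite :=
  ((Set.finite_Iic n).preimage he.injOn).subset fun a ha => (le_pastRank e hIic a).trans ha

end PastRank

/-- **Linear extension with finite pasts.**
A partial order with finite pasts on a countable type extends to a linear order that
still has finite pasts. -/
theorem exists_linear_extension_finite_past
    {α : Type*} [Countable α] [PartialOrder α]
    (hfin : ∀ a : α, {b : α | b < a}.Finite) :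
    ∃ L : LinearOrder α,
      (∀ a b : α, a ≤ b → L.le a b) ∧
      (∀ a : α, {b : α | L.lt b a}.Finite) := by
  obtain ⟨e, he⟩ := Countable.exists_injective_nat α
  have hIic : ∀ a : α, (Set.Iic a).Finite := fun a =>
    Set.Iio_insert (a := a) ▸ (hfin a).insert a
  exact exists_linearExtension_finite_past_of_rank (monotone_pastRank e hIic)
    (finite_pastRank_preimage_Iic e hIic he)
end
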